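/- arXiv:1601.05882 — 2 statements merged into one kernel-verified Lean document; each statement's English description precedes it below -/
import Mathlib

section
/- Let S be a real symmetric n×n matrix with eigenvalues {e_i}, and let 0 < λ ≤ Λ. Then there exists a real symmetric matrix A with λ/2 ≤ A ≤ 2Λ (in the sense that all eigenvalues of A lie in [λ/2, 2Λ]) such that trace(A·S) = 2Λ·Σ_{e_i<0} e_i + (λ/2)·Σ_{e_i>0} e_i. -/
/-!
Take `A = f(S)` in the functional calculus of `S`, where `f` is `2Λ` on the negative reals and
`λ/2` elsewhere. The spectrum of `A` is `f` of the spectrum of `S`, which lies in `[λ/2, 2Λ]`, and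
`A * S = (x ↦ f x * x)(S)`, whose trace is `∑ f(eᵢ) eᵢ`.
-/

open Matrix MatrixOrder

namespace Matrix.IsHermitian

variable {n 𝕜 : Type*} [RCLike 𝕜] [Fintype n] [DecidableEq n] {A : Matrix n n 𝕜}

lemma continuousOn_spectrum (hA : A.IsHermitian) (f : ℝ → ℝ) :
    ContinuousOn f (spectrum ℝ A) :=
  hA.spectrum_real_eq_range_eigenvalues ▸ (Set.finite_range _).continuousOn f

lemma trace_cfc (hA : A.IsHermitian) (f : ℝ → ℝ) :
    (cfc f A).trace = ∑ i, (f (hA.eigenvalues i) : 𝕜) := by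
  rw [hA.cfc_eq, IsHermitian.cfc, Unitary.conjStarAlgAut_apply, trace_mul_cycle,
    Unitary.coe_star_mul_self, one_mul, trace_diagonal]
  rfl

lemma trace_cfc_mul_self (hA : A.IsHermitian) (f : ℝ → ℝ) :
    (cfc f A * A).trace = ∑ i, ((f (hA.eigenvalues i) * hA.eigenvalues i : ℝ) : 𝕜) := by
  rw [← hA.trace_cfc fun x ↦ f x * x, cfc_mul f (fun x ↦ x) A (hA.continuousOn_spectrum f),
    cfc_id' ℝ A]

lemma smul_one_le_cfc (hA : A.IsHermitian) {f : ℝ → ℝ} {r : ℝ}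
    (h : ∀ i, r ≤ f (hA.eigenvalues i)) : r • 1 ≤ cfc f A := by
  rw [← Algebra.algebraMap_eq_smul_one]
  refine algebraMap_le_cfc f r A ?_ (hA.continuousOn_spectrum f)
  simpa [hA.spectrum_real_eq_range_eigenvalues] using h

lemma cfc_le_smul_one (hA : A.IsHermitian) {f : ℝ → ℝ} {r : ℝ}
    (h : ∀ i, f (hA.eigenvalues i) ≤ r) : cfc f A ≤ r • 1 := by
  rw [← Algebra.algebraMap_eq_smul_one]
  refine cfc_le_algebraMap f r A ?_ (hA.continuousOn_spectrum f)
  simpa [hA.spectrum_real_eq_range_eigenvalues] using h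

end Matrix.IsHermitian

lemma mul_eq_ite_neg_add_ite_pos {a b : ℝ} (x : ℝ) :
    (if x < 0 then a else b) * x = a * (if x < 0 then x else 0) + b * (if 0 < x then x else 0) := by
  rcases lt_trichotomy x 0 with hx | rfl | hx
  · simp [hx, hx.not_gt]
  · simp
  · simp [hx, hx.not_gt]

/-- Given a real symmetric matrix `S` with eigenvalues `{e_i}` and `0 < λ ≤ Λ`, there is a
symmetric matrix `A` with eigenvalues in `[λ/2, 2Λ]` such that
`trace (A·S) = 2Λ·Σ_{e<0} e + (λ/2)·Σ_{e>0} e`. -/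
theorem exists_extremal_matrix (n : ℕ) (S : Matrix (Fin n) (Fin n) ℝ) (hS : S.IsHermitian)
    (la La : ℝ) (hla : 0 < la) (hlaLa : la ≤ La) :
    ∃ A : Matrix (Fin n) (Fin n) ℝ, A.IsHermitian ∧
      (A - (la / 2) • (1 : Matrix (Fin n) (Fin n) ℝ)).PosSemidef ∧
      ((2 * La) • (1 : Matrix (Fin n) (Fin n) ℝ) - A).PosSemidef ∧
      (A * S).trace =
        2 * La * (∑ i, if hS.eigenvalues i < 0 then hS.eigenvalues i else 0) +
        (la / 2) * (∑ i, if 0 < hS.eigenvalues i then hS.eigenvalues i else 0) := by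
  set c : ℝ → ℝ := fun x ↦ if x < 0 then 2 * La else la / 2
  have hc : ∀ x, la / 2 ≤ c x ∧ c x ≤ 2 * La := fun x ↦ by
    by_cases hx : x < 0 <;> simp only [c, hx, if_true, if_false] <;> constructor <;> linarith
  refine ⟨cfc c S, cfc_predicate c S, le_iff.mp (hS.smul_one_le_cfc fun _ ↦ (hc _).1),
    le_iff.mp (hS.cfc_le_smul_one fun _ ↦ (hc _).2), ?_⟩
  simp only [hS.trace_cfc_mul_self, RCLike.ofReal_real_eq_id, id, c, mul_eq_ite_neg_add_ite_pos,
    Finset.sum_add_distrib, Finset.mul_sum]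
end

section
/- Let S be a real symmetric n×n matrix with eigenvalues {e_i} and 0 < λ ≤ Λ. If A is any symmetric matrix with λ ≤ A ≤ Λ, then trace(A·S) ≥ λ·Σ_{e_i>0} e_i + Λ·Σ_{e_i<0} e_i. Consequently, if Ã is the matrix from the previous construction satisfying trace(Ã·S) = 2Λ·Σ_{e<0} e + (λ/2)·Σ_{e>0} e, then trace(Ã·S) - trace(A·S) ≤ -min{Λ, λ/2}·Σ_i |e_i|. -/
open Matrix

lemma psd_diag_nonneg {n : ℕ} {M : Matrix (Fin n) (Fin n) ℝ} (hM : M.PosSemidef)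
    (i : Fin n) : 0 ≤ M i i := by
  exact hM.diag_nonneg


/-- If `λ ≤ A ≤ Λ` (eigenvalue bounds) then `trace (A·S) ≥ λ·Σ_{e>0} e + Λ·Σ_{e<0} e`,
where `{e_i}` are the eigenvalues of the symmetric matrix `S`. Consequently, for any `Ã`
with `trace (Ã·S) = 2Λ·Σ_{e<0} e + (λ/2)·Σ_{e>0} e` one has
`trace (Ã·S) - trace (A·S) ≤ -min{Λ, λ/2}·Σ_i |e_i|`. -/
theorem trace_lower_bound_and_gap (n : ℕ) (S : Matrix (Fin n) (Fin n) ℝ)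
    (hS : S.IsHermitian) (la La : ℝ) (hla : 0 < la) (hlaLa : la ≤ La)
    (A : Matrix (Fin n) (Fin n) ℝ) (hA : A.IsHermitian)
    (hA1 : (A - la • (1 : Matrix (Fin n) (Fin n) ℝ)).PosSemidef)
    (hA2 : (La • (1 : Matrix (Fin n) (Fin n) ℝ) - A).PosSemidef) :
    la * (∑ i, if 0 < hS.eigenvalues i then hS.eigenvalues i else 0) +
      La * (∑ i, if hS.eigenvalues i < 0 then hS.eigenvalues i else 0) ≤ (A * S).trace ∧
    ∀ At : Matrix (Fin n) (Fin n) ℝ,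
      (At * S).trace =
        2 * La * (∑ i, if hS.eigenvalues i < 0 then hS.eigenvalues i else 0) +
        (la / 2) * (∑ i, if 0 < hS.eigenvalues i then hS.eigenvalues i else 0) →
      (At * S).trace - (A * S).trace ≤ -(min La (la / 2)) * ∑ i, |hS.eigenvalues i| := by
  set e := hS.eigenvalues with he
  set U : Matrix (Fin n) (Fin n) ℝ := (hS.eigenvectorUnitary : Matrix (Fin n) (Fin n) ℝ) with hU
  have hUU : star U * U = 1 := (Matrix.mem_unitaryGroup_iff').mp hS.eigenvectorUnitary.2
  set B : Matrix (Fin n) (Fin n) ℝ := star U * A * U with hB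
  have hconj : ∀ M : Matrix (Fin n) (Fin n) ℝ, M.PosSemidef →
      (Uᴴ * M * U).PosSemidef := fun M hM => hM.conjTranspose_mul_mul_same U
  have hstar : Uᴴ = star U := rfl
  have key1 : (B - la • 1).PosSemidef := by
    have := hconj _ hA1
    rw [hstar] at this
    have heq : star U * (A - la • (1 : Matrix (Fin n) (Fin n) ℝ)) * U = B - la • 1 := by
      rw [Matrix.mul_sub, Matrix.sub_mul, hB, Matrix.mul_smul, Matrix.smul_mul,
        Matrix.mul_one, hUU]
    rwa [heq] at this
  have key2 : (La • 1 - B).PosSemidef := by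
    have := hconj _ hA2
    rw [hstar] at this
    have heq : star U * (La • (1 : Matrix (Fin n) (Fin n) ℝ) - A) * U = La • 1 - B := by
      rw [Matrix.mul_sub, Matrix.sub_mul, hB, Matrix.mul_smul, Matrix.smul_mul,
        Matrix.mul_one, hUU]
    rwa [heq] at this
  have hBlo : ∀ i, la ≤ B i i := by
    intro i
    have := psd_diag_nonneg key1 i
    simp [Matrix.sub_apply, Matrix.smul_apply, Matrix.one_apply] at this
    linarith
  have hBhi : ∀ i, B i i ≤ La := by
    intro i
    have := psd_diag_nonneg key2 i
    simp [Matrix.sub_apply, Matrix.smul_apply, Matrix.one_apply] at this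
    linarith
  have htr : (A * S).trace = ∑ i, B i i * e i := by
    conv_lhs => rw [hS.spectral_theorem, Unitary.conjStarAlgAut_apply]
    rw [← Matrix.mul_assoc, ← Matrix.mul_assoc, Matrix.trace_mul_cycle]
    simp only [Matrix.trace, Matrix.diag, Matrix.mul_diagonal, ← Matrix.mul_assoc]
    rfl
  have hmain : la * (∑ i, if 0 < e i then e i else 0) +
      La * (∑ i, if e i < 0 then e i else 0) ≤ (A * S).trace := by
    rw [htr, Finset.mul_sum, Finset.mul_sum, ← Finset.sum_add_distrib]
    apply Finset.sum_le_sum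
    intro i _
    rcases lt_trichotomy (e i) 0 with h | h | h
    · simp only [if_neg (by linarith : ¬ 0 < e i), if_pos h, mul_zero, zero_add]
      nlinarith [hBhi i]
    · simp [h]
    · simp only [if_pos h, if_neg (by linarith : ¬ e i < 0), mul_zero, add_zero]
      nlinarith [hBlo i]
  refine ⟨hmain, ?_⟩
  intro At ht
  have hP : 0 ≤ ∑ i, if 0 < e i then e i else 0 :=
    Finset.sum_nonneg fun i _ => by split <;> simp_all <;> linarith
  have hN : (∑ i, if e i < 0 then e i else 0) ≤ 0 :=
    Finset.sum_nonpos fun i _ => by split <;> simp_all <;> linarith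
  have habs : ∑ i, |e i| = (∑ i, if 0 < e i then e i else 0) -
      (∑ i, if e i < 0 then e i else 0) := by
    rw [← Finset.sum_sub_distrib]
    apply Finset.sum_congr rfl
    intro i _
    rcases lt_trichotomy (e i) 0 with h | h | h
    · rw [abs_of_neg h]; simp [h, not_lt_of_gt h]
    · simp [h]
    · rw [abs_of_pos h]; simp [h, not_lt_of_gt h]
  rw [ht, habs]
  have h1 : min La (la / 2) ≤ La := min_le_left _ _
  have h2 : min La (la / 2) ≤ la / 2 := min_le_right _ _
  nlinarith [hmain, mul_le_mul_of_nonpos_right h1 hN, mul_le_mul_of_nonneg_right h2 hP]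
end
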